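/- A finite bimatrix game (B1, B2) admits an exact potential if and only if for all γ, γ' and σ, σ': B1(γ,σ) − B1(γ',σ) + B2(γ',σ) − B2(γ',σ') + B1(γ',σ') − B1(γ,σ') + B2(γ,σ') − B2(γ,σ) = 0 (the four-cycle condition). -/
import Mathlib

/-- A bimatrix game admits an exact potential iff the four-cycle condition holds. -/
theorem stmt_5 (n m : ℕ) (B1 B2 : Fin n × Fin m → ℝ) :
    (∃ φ : Fin n × Fin m → ℝ,
        (∀ γ γ' σ, B1 (γ, σ) - B1 (γ', σ) = φ (γ, σ) - φ (γ', σ)) ∧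
        (∀ γ σ σ', B2 (γ, σ) - B2 (γ, σ') = φ (γ, σ) - φ (γ, σ'))) ↔
      (∀ γ γ' σ σ',
        B1 (γ, σ) - B1 (γ', σ) + (B2 (γ', σ) - B2 (γ', σ')) +
          (B1 (γ', σ') - B1 (γ, σ')) + (B2 (γ, σ') - B2 (γ, σ)) = 0) := by
  constructor
  · rintro ⟨φ, h1, h2⟩ γ γ' σ σ'
    have a := h1 γ γ' σ
    have b := h1 γ γ' σ'
    have c := h2 γ σ σ'
    have d := h2 γ' σ σ'
    linarith
  · intro hc
    by_cases hm : Nonempty (Fin m)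
    · obtain ⟨σ0⟩ := hm
      refine ⟨fun p => B1 (p.1, σ0) + B2 p - B2 (p.1, σ0), ?_, ?_⟩
      · intro γ γ' σ
        have := hc γ γ' σ σ0
        simp only []
        linarith
      · intro γ σ σ'
        simp only []
        ring
    · exact ⟨0, fun γ γ' σ => absurd ⟨σ⟩ hm, fun γ σ => absurd ⟨σ⟩ hm⟩
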